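/- arXiv:2007.02174 — 3 statements merged into one kernel-verified Lean document; each statement's English description precedes it below -/
import Mathlib

section
/- For all real numbers r ≥ 0 and u₁, u₂ ∈ ℝ, one has ∫₀^{2π} exp(r(u₁ cos θ + u₂ sin θ)) dθ = Σ_{n=0}^∞ 2π · r^{2n} (u₁² + u₂²)^n / (2^{2n} (n!)²). -/
/-!
Writing `(u₁, u₂)` in polar form turns the integrand into `exp (a cos (θ - φ))` with
`a = r √(u₁² + u₂²)`, and by periodicity the shift by `φ` can be dropped. Expanding the exponential
and integrating term by term (dominated by `exp |a|`), the odd moments of `cos` over a period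
vanish, while the Wallis recursion gives `∫₀^{2π} cos^{2m} = 2π (2m)! / (4^m (m!)²)`.
-/

open Real

theorem hasSum_intervalIntegral_exp {f : ℝ → ℝ} (hf : Continuous f) (a b : ℝ) :
    HasSum (fun n : ℕ => ∫ t in a..b, f t ^ n / n.factorial) (∫ t in a..b, exp (f t)) := by
  have hexp : ∀ x : ℝ, HasSum (fun n : ℕ => x ^ n / n.factorial) (exp x) := fun x => by
    rw [exp_eq_exp_ℝ]; exact NormedSpace.expSeries_div_hasSum_exp x
  refine intervalIntegral.hasSum_integral_of_dominated_convergence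
    (fun n t => |f t| ^ n / n.factorial) (fun n => by fun_prop) (fun n => ?_)
    (.of_forall fun t _ => (hexp |f t|).summable) ?_ (.of_forall fun t _ => hexp (f t))
  · exact .of_forall fun t _ => by simp
  · simp_rw [fun t => (hexp |f t|).tsum_eq]
    exact (by fun_prop : Continuous fun t => exp |f t|).intervalIntegrable a b

theorem integral_cos_pow_add_two_zero_two_pi (n : ℕ) :
    ∫ θ in (0:ℝ)..2 * π, cos θ ^ (n + 2) = (n + 1) / (n + 2) * ∫ θ in (0:ℝ)..2 * π, cos θ ^ n := by
  simp [integral_cos_pow]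

theorem integral_cos_pow_odd_zero_two_pi (m : ℕ) :
    ∫ θ in (0:ℝ)..2 * π, cos θ ^ (2 * m + 1) = 0 := by
  induction m with
  | zero => simp
  | succ k ih => rw [show 2 * (k + 1) + 1 = 2 * k + 1 + 2 by ring,
      integral_cos_pow_add_two_zero_two_pi, ih, mul_zero]

theorem integral_cos_pow_even_zero_two_pi (m : ℕ) :
    ∫ θ in (0:ℝ)..2 * π, cos θ ^ (2 * m) =
      2 * π * (2 * m).factorial / (4 ^ m * (m.factorial : ℝ) ^ 2) := by
  induction m with
  | zero => simp
  | succ k ih =>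
    rw [show 2 * (k + 1) = 2 * k + 2 by ring, integral_cos_pow_add_two_zero_two_pi, ih]
    simp only [Nat.factorial_succ]
    push_cast
    field_simp
    ring

theorem hasSum_integral_exp_mul_cos (a : ℝ) :
    HasSum (fun m : ℕ => 2 * π * a ^ (2 * m) / (4 ^ m * (m.factorial : ℝ) ^ 2))
      (∫ θ in (0:ℝ)..2 * π, exp (a * cos θ)) := by
  have h := hasSum_intervalIntegral_exp (f := fun θ => a * cos θ) (by fun_prop) 0 (2 * π)
  simp_rw [mul_pow, mul_div_right_comm, intervalIntegral.integral_const_mul] at h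
  rw [← (mul_right_injective₀ two_ne_zero).hasSum_iff] at h
  · convert h using 2 with m
    rw [Function.comp_apply, integral_cos_pow_even_zero_two_pi]
    have : ((2 * m).factorial : ℝ) ≠ 0 := by positivity
    field_simp
  · rintro n hn
    obtain ⟨m, rfl⟩ : Odd n := by
      simpa [← Nat.not_even_iff_odd] using hn
    rw [integral_cos_pow_odd_zero_two_pi, mul_zero]

theorem exists_mul_cos_add_mul_sin_eq (u₁ u₂ : ℝ) :
    ∃ φ, ∀ θ, u₁ * cos θ + u₂ * sin θ = √(u₁ ^ 2 + u₂ ^ 2) * cos (θ - φ) := by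
  set z : ℂ := ⟨u₁, u₂⟩
  have hnorm : ‖z‖ = √(u₁ ^ 2 + u₂ ^ 2) := by
    rw [Complex.norm_def, Complex.normSq_mk, sq, sq]
  refine ⟨z.arg, fun θ => ?_⟩
  rw [cos_sub, ← hnorm]
  linear_combination (-cos θ) * Complex.norm_mul_cos_arg z + (-sin θ) * Complex.norm_mul_sin_arg z

theorem Function.Periodic.intervalIntegral_comp_sub {E : Type*} [NormedAddCommGroup E]
    [NormedSpace ℝ E] {f : ℝ → E} {T : ℝ} (hf : Function.Periodic f T) (t φ : ℝ) :
    ∫ x in t..t + T, f (x - φ) = ∫ x in t..t + T, f x := by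
  rw [intervalIntegral.integral_comp_sub_right, add_sub_right_comm, hf.intervalIntegral_add_eq]

theorem integral_exp_wave_general (r u₁ u₂ : ℝ) :
    ∫ θ in (0:ℝ)..(2 * Real.pi), Real.exp (r * (u₁ * Real.cos θ + u₂ * Real.sin θ)) =
      ∑' n : ℕ, 2 * Real.pi * r ^ (2 * n) * (u₁ ^ 2 + u₂ ^ 2) ^ n /
        (2 ^ (2 * n) * (n.factorial : ℝ) ^ 2) := by
  obtain ⟨φ, hφ⟩ := exists_mul_cos_add_mul_sin_eq u₁ u₂
  set a := r * √(u₁ ^ 2 + u₂ ^ 2)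
  have hrot : ∫ θ in (0:ℝ)..2 * π, exp (r * (u₁ * cos θ + u₂ * sin θ)) =
      ∫ θ in (0:ℝ)..2 * π, exp (a * cos θ) := by
    simp_rw [hφ, ← mul_assoc]
    simpa using (cos_periodic.comp fun c => exp (a * c)).intervalIntegral_comp_sub 0 φ
  rw [hrot, (hasSum_integral_exp_mul_cos a).tsum_eq.symm]
  congr 1 with n
  rw [mul_pow, pow_mul, pow_mul, pow_mul, sq_sqrt (by positivity)]
  ring

theorem integral_exp_wave (r u₁ u₂ : ℝ) (hr : 0 ≤ r) :
    ∫ θ in (0:ℝ)..(2 * Real.pi), Real.exp (r * (u₁ * Real.cos θ + u₂ * Real.sin θ)) =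
      ∑' n : ℕ, 2 * Real.pi * r ^ (2 * n) * (u₁ ^ 2 + u₂ ^ 2) ^ n /
        (2 ^ (2 * n) * (n.factorial : ℝ) ^ 2) :=
  integral_exp_wave_general r u₁ u₂
end

section
/- For real numbers t₁, t₂, t₃ with t₃ < 0 and t₁² + t₂² < t₃², one has ∫₀^∞ e^{t₃ r} · (Σ_{n=0}^∞ 2π r^{2n}(t₁²+t₂²)^n / (2^{2n}(n!)²)) dr = 2π / √(t₃² − t₁² − t₂²). -/
/-!
Expanding the integrand termwise, the Laplace transform `∫₀^∞ r^(2n) e^(-c r) dr = (2n)! / c^(2n+1)`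
turns the `n`-th term into `(2π / c) · C(2n, n) · x^n` with `c = -t₃` and `x = (t₁² + t₂²) / (4c²)`;
the interchange of sum and integral is justified because all terms are nonnegative. The resulting
series is the generating function `∑ C(2n, n) xⁿ = 1 / √(1 - 4x)` of the central binomial
coefficients, which is the binomial series of `(1 - y)^(-1/2)` at `y = 4x`.
-/

open Real MeasureTheory Set

theorem Nat.centralBinom_mul_factorial_sq (n : ℕ) :
    n.centralBinom * n.factorial ^ 2 = (2 * n).factorial := by
  rw [Nat.centralBinom_eq_two_mul_choose, sq, ← mul_assoc]
  convert Nat.choose_mul_factorial_mul_factorial (by omega : n ≤ 2 * n) using 3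
  omega

theorem Ring.multichoose_inv_two_mul_four_pow (n : ℕ) :
    Ring.multichoose (2⁻¹ : ℝ) n * 4 ^ n = n.centralBinom := by
  have hasc (n : ℕ) : (n.factorial : ℝ) * Ring.multichoose (2⁻¹ : ℝ) n =
      (ascPochhammer ℝ n).eval 2⁻¹ := by
    rw [← nsmul_eq_mul, Ring.factorial_nsmul_multichoose_eq_ascPochhammer,
      Polynomial.ascPochhammer_smeval_eq_eval]
  induction n with
  | zero => simp
  | succ n ih =>
    have hstep := hasc (n + 1)
    rw [ascPochhammer_succ_eval, ← hasc n, Nat.factorial_succ] at hstep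
    have hcentral : ((n + 1 : ℕ) : ℝ) * (n + 1).centralBinom =
        2 * (2 * n + 1) * n.centralBinom := by
      exact_mod_cast Nat.succ_mul_centralBinom_succ n
    push_cast at hstep hcentral
    apply mul_left_cancel₀ (by positivity : (n.factorial : ℝ) * (n + 1) ≠ 0)
    linear_combination 4 ^ (n + 1) * hstep - n.factorial * hcentral +
      4 * n.factorial * (2⁻¹ + n) * ih

theorem hasSum_centralBinom_mul_pow {x : ℝ} (hx : |x| < 4⁻¹) :
    HasSum (fun n ↦ (n.centralBinom : ℝ) * x ^ n) (1 / √(1 - 4 * x)) := by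
  have hball : 4 * x ∈ Metric.eball (0 : ℝ) 1 := by
    rw [mem_eball_zero_iff, ← ofReal_norm, ENNReal.ofReal_lt_one, Real.norm_eq_abs, abs_mul]
    norm_num
    linarith
  have h := (Real.one_div_one_sub_rpow_hasFPowerSeriesOnBall_zero 2⁻¹).hasSum hball
  simp only [FormalMultilinearSeries.ofScalars_apply_eq, zero_add, smul_eq_mul] at h
  rw [Real.sqrt_eq_rpow, one_div 2]
  refine h.congr_fun fun n ↦ ?_
  rw [← Ring.multichoose_eq, ← Ring.multichoose_inv_two_mul_four_pow, mul_pow]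
  ring

theorem integrableOn_pow_mul_exp_neg_mul_Ioi (n : ℕ) {c : ℝ} (hc : 0 < c) :
    IntegrableOn (fun r : ℝ ↦ r ^ n * exp (-(c * r))) (Ioi 0) := by
  have h := integrableOn_rpow_mul_exp_neg_mul_rpow (s := n) (p := 1)
    (by linarith [n.cast_nonneg (α := ℝ)]) one_pos hc
  simpa only [rpow_natCast, rpow_one, neg_mul] using h

theorem integral_pow_mul_exp_neg_mul_Ioi (n : ℕ) {c : ℝ} (hc : 0 < c) :
    ∫ r in Ioi 0, r ^ n * exp (-(c * r)) = n.factorial / c ^ (n + 1) := by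
  have h := integral_rpow_mul_exp_neg_mul_Ioi (a := n + 1) (by positivity) hc
  rw [add_sub_cancel_right, Gamma_nat_eq_factorial] at h
  norm_cast at h
  simp only [h, one_div, inv_pow]
  ring

theorem hasSum_integral_exp_neg_mul_tsum {ι : Type*} [Countable ι] {c : ℝ} (hc : 0 < c)
    (a : ι → ℝ) (k : ι → ℕ) (hs : Summable fun i ↦ |a i| * (k i).factorial / c ^ (k i + 1)) :
    HasSum (fun i ↦ a i * (k i).factorial / c ^ (k i + 1))
      (∫ r in Ioi 0, exp (-(c * r)) * ∑' i, a i * r ^ k i) := by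
  set F : ι → ℝ → ℝ := fun i r ↦ a i * (r ^ k i * exp (-(c * r)))
  have hF_int (i : ι) : IntegrableOn (F i) (Ioi 0) :=
    (integrableOn_pow_mul_exp_neg_mul_Ioi (k i) hc).const_mul (a i)
  have hF_integral (i : ι) (b : ℝ) : ∫ r in Ioi 0, b * (r ^ k i * exp (-(c * r))) =
      b * (k i).factorial / c ^ (k i + 1) := by
    rw [integral_const_mul, integral_pow_mul_exp_neg_mul_Ioi _ hc, mul_div_assoc]
  have hF_norm (i : ι) : ∫ r in Ioi 0, ‖F i r‖ = |a i| * (k i).factorial / c ^ (k i + 1) := by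
    rw [← hF_integral]
    refine setIntegral_congr_fun measurableSet_Ioi fun r (hr : 0 < r) ↦ ?_
    rw [norm_mul, Real.norm_eq_abs, norm_of_nonneg (by positivity)]
  have hF_tsum (r : ℝ) : exp (-(c * r)) * ∑' i, a i * r ^ k i = ∑' i, F i r := by
    rw [← tsum_mul_left]
    exact tsum_congr fun i ↦ by ring
  simp only [hF_tsum]
  simpa only [F, hF_integral] using
    hasSum_integral_of_summable_integral_norm hF_int (by simpa only [hF_norm] using hs)

theorem integral_exp_bessel_series (t₁ t₂ t₃ : ℝ) (h₃ : t₃ < 0)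
    (h : t₁ ^ 2 + t₂ ^ 2 < t₃ ^ 2) :
    ∫ r in Set.Ioi (0:ℝ),
        Real.exp (t₃ * r) *
          (∑' n : ℕ, 2 * Real.pi * r ^ (2 * n) * (t₁ ^ 2 + t₂ ^ 2) ^ n /
            (2 ^ (2 * n) * (n.factorial : ℝ) ^ 2)) =
      2 * Real.pi / Real.sqrt (t₃ ^ 2 - t₁ ^ 2 - t₂ ^ 2) := by
  set s := t₁ ^ 2 + t₂ ^ 2
  obtain ⟨c, rfl⟩ : ∃ c, t₃ = -c := ⟨-t₃, (neg_neg t₃).symm⟩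
  have hc : 0 < c := neg_lt_zero.1 h₃
  set x := s / (4 * c ^ 2)
  have hx : |x| < 4⁻¹ := by
    rw [abs_of_nonneg (by positivity), div_lt_iff₀ (by positivity)]
    linarith [neg_sq c]
  set a : ℕ → ℝ := fun n ↦ 2 * π * s ^ n / (2 ^ (2 * n) * n.factorial ^ 2)
  have hterm (n : ℕ) : a n * (2 * n).factorial / c ^ (2 * n + 1) =
      2 * π / c * (n.centralBinom * x ^ n) := by
    rw [← Nat.centralBinom_mul_factorial_sq]
    simp only [a, x, div_pow, mul_pow, pow_mul]
    push_cast
    field_simp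
    ring
  have hseries := (hasSum_centralBinom_mul_pow hx).mul_left (2 * π / c)
  have hlaplace := hasSum_integral_exp_neg_mul_tsum hc a (2 * ·) <| by
    simpa only [abs_of_nonneg (by positivity : 0 ≤ a _), hterm] using hseries.summable
  simp only [hterm] at hlaplace
  have hdisc : (-c) ^ 2 - t₁ ^ 2 - t₂ ^ 2 = c ^ 2 * (1 - 4 * x) := by
    simp only [x, s]
    field_simp
    ring
  convert hlaplace.unique hseries using 1
  · simp only [neg_mul, a]
    congr! 3 with r
    exact tsum_congr fun n ↦ by ring
  · rw [hdisc, sqrt_mul (sq_nonneg c), sqrt_sq hc.le]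
    ring
end

section
/- Let A₁, …, A_d be real d×d matrices and C a fixed real d×d matrix. Suppose for all t ∈ ℝ^d in some neighborhood of 0 with ‖t₁A₁ + ⋯ + t_dA_d‖ < 1, one has (C t) · ((I − t₁A₁ − ⋯ − t_dA_d)^{-1} t) = 0. Then for every nonnegative integer n and every t ∈ ℝ^d, (C t) · ((t₁A₁ + ⋯ + t_dA_d)^n t) = 0. -/
open Matrix Filter Topology

theorem commutator_orthogonality_all_powers {d : ℕ}
    (A : Fin d → Matrix (Fin d) (Fin d) ℝ) (C : Matrix (Fin d) (Fin d) ℝ)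
    (ε : ℝ) (hε : 0 < ε)
    (h : ∀ t : Fin d → ℝ, (∀ k, |t k| < ε) →
      IsUnit (1 - ∑ k : Fin d, t k • A k) ∧
      (C.mulVec t) ⬝ᵥ (((1 - ∑ k : Fin d, t k • A k)⁻¹).mulVec t) = 0) :
    ∀ (n : ℕ) (t : Fin d → ℝ),
      (C.mulVec t) ⬝ᵥ (((∑ k : Fin d, t k • A k) ^ n).mulVec t) = 0 := by
  intro n t
  set B : Matrix (Fin d) (Fin d) ℝ := ∑ k : Fin d, t k • A k with hB
  set u : Fin d → ℝ := C.mulVec t with hu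
  set S : ℝ := ∑ k : Fin d, |t k| with hS
  have hS0 : 0 ≤ S := Finset.sum_nonneg fun k _ => abs_nonneg _
  set δ : ℝ := ε / (1 + S) with hδdef
  have hδ : 0 < δ := div_pos hε (by linarith)
  set g : ℕ → ℝ → ℝ := fun m s => u ⬝ᵥ ((B ^ m * (1 - s • B)⁻¹).mulVec t) with hg
  have hsmall : ∀ s : ℝ, |s| < δ → ∀ k, |(s • t) k| < ε := by
    intro s hs k
    have h1 : |t k| ≤ S := Finset.single_le_sum (f := fun k => |t k|)
      (fun k _ => abs_nonneg _) (Finset.mem_univ k)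
    have h2 : |s| * (1 + S) < δ * (1 + S) := by
      apply mul_lt_mul_of_pos_right hs; linarith
    have h3 : δ * (1 + S) = ε := div_mul_cancel₀ _ (by linarith)
    have : |(s • t) k| = |s| * |t k| := by simp [abs_mul]
    rw [this]
    nlinarith [abs_nonneg s]
  have hsum : ∀ s : ℝ, (∑ k : Fin d, (s • t) k • A k) = s • B := by
    intro s
    rw [hB, Finset.smul_sum]
    refine Finset.sum_congr rfl fun k _ => ?_
    simp [smul_smul]
  have hdet : ∀ s : ℝ, |s| < δ → IsUnit (1 - s • B).det := by
    intro s hs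
    have := (h (s • t) (hsmall s hs)).1
    rw [hsum] at this
    exact (Matrix.isUnit_iff_isUnit_det _).mp this
  have hinv : ∀ s : ℝ, |s| < δ →
      (1 - s • B)⁻¹ = 1 + (s • B) * (1 - s • B)⁻¹ := by
    intro s hs
    have h1 : (1 - s • B) * (1 - s • B)⁻¹ = 1 := Matrix.mul_nonsing_inv _ (hdet s hs)
    calc (1 - s • B)⁻¹ = (1 - s • B + s • B) * (1 - s • B)⁻¹ := by
          rw [sub_add_cancel, one_mul]
      _ = 1 + (s • B) * (1 - s • B)⁻¹ := by rw [add_mul, h1]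
  have hrec : ∀ (m : ℕ) (s : ℝ), |s| < δ →
      g m s = u ⬝ᵥ ((B ^ m).mulVec t) + s * g (m + 1) s := by
    intro m s hs
    have key : B ^ m * (1 - s • B)⁻¹ = B ^ m + s • (B ^ (m + 1) * (1 - s • B)⁻¹) := by
      conv_lhs => rw [hinv s hs]
      rw [mul_add, mul_one, Matrix.smul_mul, Matrix.mul_smul, ← mul_assoc, ← pow_succ]
    simp only [hg, key, Matrix.add_mulVec, Matrix.smul_mulVec, dotProduct_add,
      dotProduct_smul, smul_eq_mul]
  have hcont : ∀ m : ℕ, ContinuousAt (g m) 0 := by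
    intro m
    have h1 : Continuous fun s : ℝ => (1 : Matrix (Fin d) (Fin d) ℝ) - s • B :=
      continuous_const.sub (continuous_id.smul continuous_const)
    have h2 : ContinuousAt Inv.inv ((1 : Matrix (Fin d) (Fin d) ℝ) - (0 : ℝ) • B) := by
      apply continuousAt_matrix_inv
      have hd : ((1 : Matrix (Fin d) (Fin d) ℝ) - (0 : ℝ) • B).det = 1 := by simp
      rw [hd, Ring.inverse_eq_inv']
      exact continuousAt_inv₀ one_ne_zero
    have h3 : Continuous fun M : Matrix (Fin d) (Fin d) ℝ =>
        u ⬝ᵥ ((B ^ m * M).mulVec t) :=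
      continuous_const.dotProduct
        ((continuous_const.matrix_mul continuous_id).matrix_mulVec continuous_const)
    have h4 : ContinuousAt (fun s : ℝ => ((1 : Matrix (Fin d) (Fin d) ℝ) - s • B)⁻¹) 0 :=
      ContinuousAt.comp (f := fun s : ℝ => (1 : Matrix (Fin d) (Fin d) ℝ) - s • B) h2
        h1.continuousAt
    exact ContinuousAt.comp
      (f := fun s : ℝ => ((1 : Matrix (Fin d) (Fin d) ℝ) - s • B)⁻¹) h3.continuousAt h4
  have g0eq : ∀ m : ℕ, g m 0 = u ⬝ᵥ ((B ^ m).mulVec t) := by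
    intro m
    simp [hg]
  have at0 : ∀ m : ℕ, (∀ s : ℝ, s ≠ 0 → |s| < δ → g m s = 0) → g m 0 = 0 := by
    intro m hm
    have h1 : ∀ᶠ s : ℝ in 𝓝 0, |s| < δ := by
      have := Metric.ball_mem_nhds (0 : ℝ) hδ
      filter_upwards [this] with s hs
      simpa [Real.dist_eq] using hs
    have hev : ∀ᶠ s in 𝓝[≠] (0 : ℝ), g m s = 0 := by
      filter_upwards [h1.filter_mono nhdsWithin_le_nhds, self_mem_nhdsWithin] with s hs hs0
      exact hm s hs0 hs
    have tz : Tendsto (g m) (𝓝[≠] (0 : ℝ)) (𝓝 (g m 0)) :=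
      ((hcont m).tendsto).mono_left nhdsWithin_le_nhds
    have t2 : Tendsto (g m) (𝓝[≠] (0 : ℝ)) (𝓝 0) :=
      tendsto_const_nhds.congr' (hev.mono fun s hs => hs.symm)
    exact tendsto_nhds_unique tz t2
  have base : ∀ s : ℝ, s ≠ 0 → |s| < δ → g 0 s = 0 := by
    intro s hs0 hs
    have h2 := (h (s • t) (hsmall s hs)).2
    rw [hsum, Matrix.mulVec_smul, Matrix.mulVec_smul, smul_dotProduct, dotProduct_smul,
      smul_eq_mul, smul_eq_mul] at h2
    have : u ⬝ᵥ ((1 - s • B)⁻¹.mulVec t) = 0 := by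
      rcases mul_eq_zero.mp h2 with h' | h'
      · exact absurd h' hs0
      · rcases mul_eq_zero.mp h' with h'' | h''
        · exact absurd h'' hs0
        · exact h''
    simpa [hg] using this
  have main : ∀ m : ℕ, ∀ s : ℝ, s ≠ 0 → |s| < δ → g m s = 0 := by
    intro m
    induction m with
    | zero => exact base
    | succ k ih =>
      have pk : u ⬝ᵥ ((B ^ k).mulVec t) = 0 := by rw [← g0eq k]; exact at0 k ih
      intro s hs0 hs
      have hr := hrec k s hs
      rw [ih s hs0 hs, pk, zero_add] at hr
      exact (mul_eq_zero.mp hr.symm).resolve_left hs0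
  have := at0 n (main n)
  rwa [g0eq n] at this
end
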